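/- arXiv:1203.5276 — 2 statements merged into one kernel-verified Lean document; each statement's English description precedes it below -/
import Mathlib

section
/- Let f : [a,b] → (0,∞) be a continuous function of bounded variation and let g : [a,b] → [0,∞) be a non-vanishing function of bounded variation with g(a) = 0. Then there exists y ∈ (a,b] such that the Riemann–Stieltjes integral ∫_a^y f(x) dg(x) is strictly positive. -/
open Set Filter MeasureTheory

/-!
Let `s` be the infimum of the points where `g` does not vanish, so that `g = 0` on `[a, s)`.
As `f` is continuous and of bounded variation, its variation on `[s, y₀]` is small for some `y₀`
with `g y₀ > 0`, and we pick `y ∈ [s, y₀]` at which `g` exceeds half its supremum on `[s, y₀]`.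
For a partition of `[a, y]` tagged at right endpoints, summation by parts and `g a = 0` give
`S = f y * g y - ∑ (f (t (i + 1)) - f (t i)) * g (t i)`, in which only the `t i ≥ s` contribute;
hence `S ≥ f y * g y - 2 * g y * Var_[s, y₀] f`, which is positive and independent of the
partition. The integral exists (a continuous function is Riemann–Stieltjes integrable against a
function of bounded variation, by the Cauchy criterion on common refinements) and is a limit of
such sums.
-/

/-- The Riemann–Stieltjes sum of `f` with respect to `g` for the tagged partition with
points `t 0, …, t m` and tags `ξ 0, …, ξ (m-1)`. -/
noncomputable def RSSum (f g : ℝ → ℝ) (m : ℕ) (t ξ : ℕ → ℝ) : ℝ :=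
  ∑ i ∈ Finset.range m, f (ξ i) * (g (t (i + 1)) - g (t i))

/-- `t`, `ξ` form a tagged partition of `[a, b]` into `m` subintervals. -/
def IsTaggedPartition (a b : ℝ) (m : ℕ) (t ξ : ℕ → ℝ) : Prop :=
  0 < m ∧ t 0 = a ∧ t m = b ∧ (∀ i < m, t i < t (i + 1)) ∧
    ∀ i < m, ξ i ∈ Set.Icc (t i) (t (i + 1))

/-- `I` is the Riemann–Stieltjes integral `∫_a^b f dg`: the Riemann–Stieltjes sums tend to `I`
as the mesh of the tagged partition tends to zero. -/
def HasRSIntegral (f g : ℝ → ℝ) (a b : ℝ) (I : ℝ) : Prop :=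
  ∀ ε > 0, ∃ δ > 0, ∀ (m : ℕ) (t ξ : ℕ → ℝ), IsTaggedPartition a b m t ξ →
    (∀ i < m, t (i + 1) - t i < δ) → |RSSum f g m t ξ - I| < ε

open Classical in
/-- The Riemann–Stieltjes integral `∫_a^b f dg`, defaulting to `0` if it does not exist. -/
noncomputable def RSIntegral (f g : ℝ → ℝ) (a b : ℝ) : ℝ :=
  if h : ∃ I, HasRSIntegral f g a b I then h.choose else 0

open Topology

theorem sum_range_mul_sub_by_parts {R : Type*} [CommRing R] (F G : ℕ → R) (m : ℕ) :
    ∑ i ∈ Finset.range m, F (i + 1) * (G (i + 1) - G i) =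
      F m * G m - F 0 * G 0 - ∑ i ∈ Finset.range m, (F (i + 1) - F i) * G i := by
  induction m with
  | zero => simp
  | succ n ih => rw [Finset.sum_range_succ, ih, Finset.sum_range_succ]; ring

theorem sum_range_ite_mem_Ico_eq_sub {β M : Type*} [LinearOrder β] [AddCommGroup M] (G : ℕ → M)
    {w : ℕ → β} {c p q : ℕ} (hw : StrictMonoOn w (Iic c)) (hpq : p ≤ q) (hq : q ≤ c) :
    ∑ j ∈ Finset.range c, (if w j ∈ Ico (w p) (w q) then G (j + 1) - G j else 0) = G q - G p := by
  have hp : p ∈ Iic c := hpq.trans hq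
  have hblock : (Finset.range c).filter (fun j ↦ w j ∈ Ico (w p) (w q)) = Finset.Ico p q := by
    ext j
    simp only [Finset.mem_filter, Finset.mem_range, Finset.mem_Ico, Set.mem_Ico]
    constructor
    · rintro ⟨hj, hpj, hjq⟩
      have hj' : j ∈ Iic c := hj.le
      exact ⟨(hw.le_iff_le hp hj').1 hpj, (hw.lt_iff_lt hj' hq).1 hjq⟩
    · rintro ⟨hpj, hjq⟩
      have hj' : j ∈ Iic c := (hjq.trans_le hq).le
      exact ⟨hjq.trans_le hq, (hw.le_iff_le hp hj').2 hpj, (hw.lt_iff_lt hj' hq).2 hjq⟩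
  rw [← Finset.sum_filter, hblock, Finset.sum_Ico_sub G hpq]

theorem Finset.exists_strictMonoOn_image_Iic {α : Type*} [LinearOrder α] (S : Finset α)
    (hS : S.Nonempty) :
    ∃ (c : ℕ) (w : ℕ → α), StrictMonoOn w (Set.Iic c) ∧ w '' Set.Iic c = S := by
  classical
  let e := S.orderEmbOfFin rfl
  let w : ℕ → α := fun j ↦ if h : j < S.card then e ⟨j, h⟩ else S.min' hS
  have hcard : 0 < S.card := hS.card_pos
  have hw : ∀ j ≤ S.card - 1, ∃ h : j < S.card, w j = e ⟨j, h⟩ := fun j hj ↦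
    ⟨by omega, dif_pos _⟩
  refine ⟨S.card - 1, w, fun i hi j hj hij ↦ ?_, ?_⟩
  · obtain ⟨_, hwi⟩ := hw i hi
    obtain ⟨_, hwj⟩ := hw j hj
    rw [hwi, hwj]
    exact e.strictMono hij
  · ext x
    constructor
    · rintro ⟨j, hj, rfl⟩
      obtain ⟨_, hwj⟩ := hw j hj
      rw [hwj]
      exact S.orderEmbOfFin_mem rfl _
    · intro hx
      obtain ⟨⟨j, hj⟩, rfl⟩ : x ∈ Set.range e := by rwa [Finset.range_orderEmbOfFin]
      obtain ⟨_, hwj⟩ := hw j (by omega)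
      exact ⟨j, show j ≤ S.card - 1 by omega, hwj⟩

theorem BoundedVariationOn.sum_abs_sub_le {α : Type*} [LinearOrder α] {f : α → ℝ} {s : Set α}
    (hf : BoundedVariationOn f s) {n : ℕ} {u : ℕ → α} (hu : MonotoneOn u (Iic n))
    (us : ∀ i ≤ n, u i ∈ s) :
    ∑ i ∈ Finset.range n, |f (u (i + 1)) - f (u i)| ≤ (eVariationOn f s).toReal := by
  rw [← ENNReal.ofReal_le_iff_le_toReal hf, ENNReal.ofReal_sum_of_nonneg fun _ _ ↦ abs_nonneg _]
  simpa only [edist_dist, Real.dist_eq] using eVariationOn.sum_le_of_monotoneOn_Iic (f := f) hu us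

theorem BoundedVariationOn.bddAbove_image {α : Type*} [LinearOrder α] {f : α → ℝ} {s : Set α}
    (hf : BoundedVariationOn f s) : BddAbove (f '' s) := by
  rcases s.eq_empty_or_nonempty with rfl | ⟨x₀, hx₀⟩
  · simp
  · exact ⟨f x₀ + (eVariationOn f s).toReal, by
      rintro _ ⟨x, hx, rfl⟩
      linarith [hf.sub_le hx hx₀]⟩

theorem exists_lt_two_mul_of_bddAbove {α : Type*} {g : α → ℝ} {W : Set α}
    (hW : BddAbove (g '' W)) (hpos : ∃ x ∈ W, 0 < g x) : ∃ y ∈ W, ∀ x ∈ W, g x < 2 * g y := by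
  obtain ⟨x₀, hx₀, hgx₀⟩ := hpos
  have hM : 0 < sSup (g '' W) := hgx₀.trans_le (le_csSup hW (mem_image_of_mem g hx₀))
  obtain ⟨_, ⟨y, hy, rfl⟩, hgy⟩ :=
    exists_lt_of_lt_csSup ⟨_, mem_image_of_mem g hx₀⟩ (half_lt_self hM)
  exact ⟨y, hy, fun x hx ↦ by linarith [le_csSup hW (mem_image_of_mem g hx)]⟩

theorem IsGLB.exists_mem_eVariationOn_inter_Icc_lt {α E : Type*}
    [LinearOrder α] [TopologicalSpace α] [OrderTopology α] [PseudoEMetricSpace E]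
    {f : α → E} {T K : Set α} {s : α} (hs : IsGLB K s) (hKne : K.Nonempty) (hKT : K ⊆ T)
    (hf : BoundedVariationOn f T) (hcont : ContinuousWithinAt f T s) {ε : ENNReal}
    (hε : 0 < ε) : ∃ y ∈ K, eVariationOn f (T ∩ Icc s y) < ε := by
  have hsmall := (hf.tendsto_eVariationOn_Icc_zero_right s
    (hcont.mono inter_subset_left)).eventually (gt_mem_nhds hε)
  have : (𝓝[K] s).NeBot := mem_closure_iff_nhdsWithin_neBot.1 (hs.mem_closure hKne)
  exact ((hsmall.filter_mono (nhdsWithin_mono _ hKT)).and self_mem_nhdsWithin).exists.imp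
    fun y hy ↦ ⟨hy.2, hy.1⟩

namespace IsTaggedPartition

variable {a b : ℝ} {m : ℕ} {t ξ : ℕ → ℝ}

theorem strictMonoOn (h : IsTaggedPartition a b m t ξ) : StrictMonoOn t (Iic m) :=
  strictMonoOn_Iic_of_lt_succ fun i hi ↦ h.2.2.2.1 i hi

theorem mem_Icc (h : IsTaggedPartition a b m t ξ) {i : ℕ} (hi : i ≤ m) : t i ∈ Icc a b := by
  refine ⟨?_, ?_⟩
  · rw [← h.2.1]; exact h.strictMonoOn.monotoneOn (Nat.zero_le _) hi (Nat.zero_le _)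
  · rw [← h.2.2.1]; exact h.strictMonoOn.monotoneOn hi (le_refl m) hi

theorem tag_mem_Icc (h : IsTaggedPartition a b m t ξ) {i : ℕ} (hi : i < m) : ξ i ∈ Icc a b :=
  ⟨(h.mem_Icc hi.le).1.trans (h.2.2.2.2 i hi).1, (h.2.2.2.2 i hi).2.trans (h.mem_Icc hi).2⟩

theorem exists_mem_Ico (h : IsTaggedPartition a b m t ξ) {x : ℝ} (hx : x ∈ Ico a b) :
    ∃ i < m, x ∈ Ico (t i) (t (i + 1)) := by
  have hm : m - 1 + 1 = m := Nat.sub_add_cancel h.1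
  have hex : ∃ i, x < t (i + 1) := ⟨m - 1, by rw [hm, h.2.2.1]; exact hx.2⟩
  refine ⟨Nat.find hex, ?_, ?_, Nat.find_spec hex⟩
  · have := Nat.find_min' hex (show x < t (m - 1 + 1) by rw [hm, h.2.2.1]; exact hx.2)
    omega
  · rcases hi : Nat.find hex with _ | k
    · rw [h.2.1]; exact hx.1
    · exact not_lt.1 (Nat.find_min hex (hi ▸ k.lt_succ_self))

end IsTaggedPartition

theorem exists_isTaggedPartition_right {a b δ : ℝ} (hab : a < b) (hδ : 0 < δ) :
    ∃ (m : ℕ) (t : ℕ → ℝ), IsTaggedPartition a b m t (fun i ↦ t (i + 1)) ∧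
      ∀ i < m, t (i + 1) - t i < δ := by
  obtain ⟨n, hn⟩ := exists_nat_gt ((b - a) / δ)
  have hn0 : (0 : ℝ) < n := (div_pos (sub_pos.2 hab) hδ).trans hn
  have hh : 0 < (b - a) / n := div_pos (sub_pos.2 hab) hn0
  have hstep : ∀ i : ℕ, a + (i + 1 : ℕ) * ((b - a) / n) - (a + i * ((b - a) / n)) = (b - a) / n :=
    fun i ↦ by push_cast; ring
  refine ⟨n, fun i ↦ a + i * ((b - a) / n), ⟨by exact_mod_cast hn0, by simp, by field_simp; ring,
    fun i _ ↦ by linarith [hstep i], fun i _ ↦ ⟨by linarith [hstep i], le_rfl⟩⟩, fun i _ ↦ ?_⟩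
  rw [hstep, div_lt_iff₀ hn0]
  rwa [div_lt_iff₀ hδ, mul_comm] at hn

noncomputable def partitionStep (f : ℝ → ℝ) (m : ℕ) (t ξ : ℕ → ℝ) (x : ℝ) : ℝ :=
  ∑ i ∈ Finset.range m, if x ∈ Ico (t i) (t (i + 1)) then f (ξ i) else 0

theorem partitionStep_eq {f : ℝ → ℝ} {m i : ℕ} {t ξ : ℕ → ℝ} {x : ℝ}
    (ht : StrictMonoOn t (Iic m)) (hi : i < m) (hx : x ∈ Ico (t i) (t (i + 1))) :
    partitionStep f m t ξ x = f (ξ i) := by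
  rw [partitionStep, Finset.sum_eq_single_of_mem i (Finset.mem_range.2 hi), if_pos hx]
  intro k hk hki
  have hk : k < m := Finset.mem_range.1 hk
  rw [if_neg]
  rintro ⟨hkx, hxk⟩
  rcases lt_or_gt_of_ne hki with hlt | hlt
  · linarith [hx.1, ht.monotoneOn (show k + 1 ∈ Iic m from hk) hi.le (show k + 1 ≤ i from hlt)]
  · linarith [hx.2, ht.monotoneOn (show i + 1 ∈ Iic m from hi) hk.le (show i + 1 ≤ k from hlt)]

theorem RSSum_eq_sum_partitionStep (f g : ℝ → ℝ) {m c : ℕ} {t ξ w : ℕ → ℝ}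
    (ht : MonotoneOn t (Iic m)) (hw : StrictMonoOn w (Iic c))
    (htw : ∀ i ≤ m, t i ∈ w '' Iic c) :
    RSSum f g m t ξ =
      ∑ j ∈ Finset.range c, partitionStep f m t ξ (w j) * (g (w (j + 1)) - g (w j)) := by
  have hdiff : ∀ i < m, g (t (i + 1)) - g (t i) = ∑ j ∈ Finset.range c,
      (if w j ∈ Ico (t i) (t (i + 1)) then g (w (j + 1)) - g (w j) else 0) := by
    intro i hi
    obtain ⟨p, hp, hpt⟩ := htw i hi.le
    obtain ⟨q, hq, hqt⟩ := htw (i + 1) hi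
    rw [← hpt, ← hqt]
    have hpq : p ≤ q := (hw.le_iff_le hp hq).1 (hpt ▸ hqt ▸ ht hi.le hi i.le_succ)
    exact (sum_range_ite_mem_Ico_eq_sub (fun j ↦ g (w j)) hw hpq hq).symm
  simp only [RSSum, partitionStep, Finset.sum_mul]
  rw [Finset.sum_comm]
  refine Finset.sum_congr rfl fun i hi ↦ ?_
  rw [hdiff i (Finset.mem_range.1 hi), Finset.mul_sum]
  refine Finset.sum_congr rfl fun j _ ↦ ?_
  split_ifs <;> simp

theorem IsTaggedPartition.abs_partitionStep_sub_le {f : ℝ → ℝ} {a b δ ε : ℝ}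
    (hf : ∀ x ∈ Icc a b, ∀ x' ∈ Icc a b, |x - x'| < δ → |f x - f x'| ≤ ε) {m : ℕ} {t ξ : ℕ → ℝ}
    (hP : IsTaggedPartition a b m t ξ) (hPδ : ∀ i < m, t (i + 1) - t i < δ) {x : ℝ}
    (hx : x ∈ Ico a b) : |partitionStep f m t ξ x - f x| ≤ ε := by
  obtain ⟨i, hi, hxi⟩ := hP.exists_mem_Ico hx
  obtain ⟨hξt, hξt'⟩ := hP.2.2.2.2 i hi
  rw [partitionStep_eq hP.strictMonoOn hi hxi]
  refine hf _ (hP.tag_mem_Icc hi) _ (Ico_subset_Icc_self hx) (abs_lt.2 ⟨?_, ?_⟩) <;>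
    linarith [hPδ i hi, hxi.1, hxi.2]

/-- Both sums are compared on the common refinement of the two partitions, where each is the
sum of a step function within `ε` of `f` against the increments of `g`. -/
theorem abs_RSSum_sub_RSSum_le {f g : ℝ → ℝ} {a b δ ε : ℝ}
    (hf : ∀ x ∈ Icc a b, ∀ x' ∈ Icc a b, |x - x'| < δ → |f x - f x'| ≤ ε)
    (hg : BoundedVariationOn g (Icc a b)) (hε : 0 ≤ ε)
    {m n : ℕ} {t ξ u ζ : ℕ → ℝ}
    (hP : IsTaggedPartition a b m t ξ) (hPδ : ∀ i < m, t (i + 1) - t i < δ)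
    (hQ : IsTaggedPartition a b n u ζ) (hQδ : ∀ i < n, u (i + 1) - u i < δ) :
    |RSSum f g m t ξ - RSSum f g n u ζ| ≤ 2 * ε * (eVariationOn g (Icc a b)).toReal := by
  classical
  set S : Finset ℝ := (Finset.range (m + 1)).image t ∪ (Finset.range (n + 1)).image u
  have htS : ∀ i ≤ m, t i ∈ S := fun i hi ↦
    Finset.mem_union_left _ (Finset.mem_image_of_mem t (Finset.mem_range.2 (by omega)))
  have huS : ∀ i ≤ n, u i ∈ S := fun i hi ↦
    Finset.mem_union_right _ (Finset.mem_image_of_mem u (Finset.mem_range.2 (by omega)))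
  have hSab : ∀ x ∈ S, x ∈ Icc a b := by
    intro x hx
    rcases Finset.mem_union.1 hx with hx | hx <;> obtain ⟨i, hi, rfl⟩ := Finset.mem_image.1 hx
    · exact hP.mem_Icc (Nat.lt_succ_iff.1 (Finset.mem_range.1 hi))
    · exact hQ.mem_Icc (Nat.lt_succ_iff.1 (Finset.mem_range.1 hi))
  obtain ⟨c, w, hw, hwS⟩ := S.exists_strictMonoOn_image_Iic ⟨a, hP.2.1 ▸ htS 0 (Nat.zero_le _)⟩
  have hwab : ∀ j ≤ c, w j ∈ Icc a b := fun j hj ↦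
    hSab _ (by rw [← Finset.mem_coe, ← hwS]; exact mem_image_of_mem w hj)
  have hwIco : ∀ j < c, w j ∈ Ico a b := fun j hj ↦
    ⟨(hwab j hj.le).1, (hw hj.le (le_refl c) hj).trans_le (hwab c le_rfl).2⟩
  have hw' : ∀ x ∈ S, x ∈ w '' Iic c := fun x hx ↦ by rw [hwS]; exact hx
  rw [RSSum_eq_sum_partitionStep f g hP.strictMonoOn.monotoneOn hw fun i hi ↦ hw' _ (htS i hi),
    RSSum_eq_sum_partitionStep f g hQ.strictMonoOn.monotoneOn hw fun i hi ↦ hw' _ (huS i hi),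
    ← Finset.sum_sub_distrib]
  calc |∑ j ∈ Finset.range c, (partitionStep f m t ξ (w j) * (g (w (j + 1)) - g (w j)) -
          partitionStep f n u ζ (w j) * (g (w (j + 1)) - g (w j)))|
      ≤ ∑ j ∈ Finset.range c, 2 * ε * |g (w (j + 1)) - g (w j)| := by
        refine (Finset.abs_sum_le_sum_abs _ _).trans (Finset.sum_le_sum fun j hj ↦ ?_)
        have hj := hwIco j (Finset.mem_range.1 hj)
        have hPj := hP.abs_partitionStep_sub_le hf hPδ hj
        have hQj := hQ.abs_partitionStep_sub_le hf hQδ hj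
        rw [← sub_mul, abs_mul]
        gcongr
        rw [abs_le] at hPj hQj ⊢
        constructor <;> linarith
    _ = 2 * ε * ∑ j ∈ Finset.range c, |g (w (j + 1)) - g (w j)| := (Finset.mul_sum ..).symm
    _ ≤ 2 * ε * (eVariationOn g (Icc a b)).toReal := by
        gcongr
        exact hg.sum_abs_sub_le hw.monotoneOn hwab

theorem exists_hasRSIntegral_of_cauchy {f g : ℝ → ℝ} {a b : ℝ} (hab : a < b)
    (h : ∀ ε > 0, ∃ δ > 0, ∀ (m : ℕ) (t ξ : ℕ → ℝ) (n : ℕ) (u ζ : ℕ → ℝ),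
      IsTaggedPartition a b m t ξ → (∀ i < m, t (i + 1) - t i < δ) →
      IsTaggedPartition a b n u ζ → (∀ i < n, u (i + 1) - u i < δ) →
      |RSSum f g m t ξ - RSSum f g n u ζ| ≤ ε) :
    ∃ I, HasRSIntegral f g a b I := by
  choose m t ht hmesh using fun k : ℕ ↦
    exists_isTaggedPartition_right hab (Nat.one_div_pos_of_nat (n := k))
  have hfine : ∀ δ > 0, ∀ᶠ k in atTop, ∀ i < m k, t k (i + 1) - t k i < δ := fun δ hδ ↦
    (tendsto_one_div_add_atTop_nhds_zero_nat.eventually (gt_mem_nhds hδ)).mono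
      fun k hk i hi ↦ (hmesh k i hi).trans hk
  let S : ℕ → ℝ := fun k ↦ RSSum f g (m k) (t k) (fun i ↦ t k (i + 1))
  have hS : CauchySeq S := by
    refine Metric.cauchySeq_iff.2 fun ε hε ↦ ?_
    obtain ⟨δ, hδ, hc⟩ := h (ε / 2) (half_pos hε)
    obtain ⟨N, hN⟩ := eventually_atTop.1 (hfine δ hδ)
    exact ⟨N, fun k hk l hl ↦
      (hc _ _ _ _ _ _ (ht k) (hN k hk) (ht l) (hN l hl)).trans_lt (half_lt_self hε)⟩
  obtain ⟨I, hI⟩ := cauchySeq_tendsto_of_complete hS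
  refine ⟨I, fun ε hε ↦ ?_⟩
  obtain ⟨δ, hδ, hc⟩ := h (ε / 2) (half_pos hε)
  refine ⟨δ, hδ, fun p s ξ hP hPδ ↦ ?_⟩
  have : |RSSum f g p s ξ - I| ≤ ε / 2 :=
    le_of_tendsto (tendsto_const_nhds.sub hI).abs
      ((hfine δ hδ).mono fun k hk ↦ hc _ _ _ _ _ _ hP hPδ (ht k) hk)
  linarith

theorem exists_hasRSIntegral {f g : ℝ → ℝ} {a b : ℝ} (hab : a < b)
    (hf : ContinuousOn f (Icc a b)) (hg : BoundedVariationOn g (Icc a b)) :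
    ∃ I, HasRSIntegral f g a b I := by
  refine exists_hasRSIntegral_of_cauchy hab fun ε hε ↦ ?_
  set V := (eVariationOn g (Icc a b)).toReal
  have hV : 0 ≤ V := ENNReal.toReal_nonneg
  obtain ⟨δ, hδ, hfδ⟩ := Metric.uniformContinuousOn_iff_le.1
    (isCompact_Icc.uniformContinuousOn_of_continuous hf) (ε / (2 * (V + 1))) (by positivity)
  refine ⟨δ, hδ, fun m t ξ n u ζ hP hPδ hQ hQδ ↦ ?_⟩
  have hmod : ∀ x ∈ Icc a b, ∀ x' ∈ Icc a b, |x - x'| < δ → |f x - f x'| ≤ ε / (2 * (V + 1)) :=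
    fun x hx x' hx' hxx' ↦ by
      simpa only [Real.dist_eq] using hfδ x hx x' hx' (by rw [Real.dist_eq]; exact hxx'.le)
  refine (abs_RSSum_sub_RSSum_le hmod hg (by positivity) hP hPδ hQ hQδ).trans ?_
  rw [show 2 * (ε / (2 * (V + 1))) * V = ε * (V / (V + 1)) by field_simp]
  exact mul_le_of_le_one_right hε.le ((div_le_one (by positivity)).2 (by linarith))

theorem HasRSIntegral.le_of_le_RSSum_right {f g : ℝ → ℝ} {a b I c : ℝ}
    (hI : HasRSIntegral f g a b I) (hab : a < b)
    (h : ∀ (m : ℕ) (t : ℕ → ℝ), IsTaggedPartition a b m t (fun i ↦ t (i + 1)) →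
      c ≤ RSSum f g m t (fun i ↦ t (i + 1))) :
    c ≤ I := by
  refine le_of_forall_pos_lt_add fun ε hε ↦ ?_
  obtain ⟨δ, hδ, hI⟩ := hI ε hε
  obtain ⟨m, t, hP, hPδ⟩ := exists_isTaggedPartition_right hab hδ
  linarith [(abs_lt.1 (hI m t _ hP hPδ)).2, h m t hP]

theorem le_RSIntegral_of_le_RSSum_right {f g : ℝ → ℝ} {a b c : ℝ} (hab : a < b)
    (hf : ContinuousOn f (Icc a b)) (hg : BoundedVariationOn g (Icc a b))
    (h : ∀ (m : ℕ) (t : ℕ → ℝ), IsTaggedPartition a b m t (fun i ↦ t (i + 1)) →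
      c ≤ RSSum f g m t (fun i ↦ t (i + 1))) :
    c ≤ RSIntegral f g a b := by
  have hex := exists_hasRSIntegral hab hf hg
  rw [RSIntegral, dif_pos hex]
  exact hex.choose_spec.le_of_le_RSSum_right hab h

theorem le_RSSum_right {f g : ℝ → ℝ} {a b s M : ℝ} {T : Set ℝ} {m : ℕ} {t : ℕ → ℝ}
    (hP : IsTaggedPartition a b m t (fun i ↦ t (i + 1))) (hga : g a = 0) (hsb : s ≤ b)
    (hg0 : ∀ x ∈ Ico a s, g x = 0) (hg : ∀ x ∈ Icc s b, 0 ≤ g x ∧ g x ≤ M)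
    (hf : BoundedVariationOn f T) (hT : Icc s b ⊆ T) :
    f b * g b - M * (eVariationOn f T).toReal ≤ RSSum f g m t (fun i ↦ t (i + 1)) := by
  have hM : 0 ≤ M := (hg b ⟨hsb, le_rfl⟩).1.trans (hg b ⟨hsb, le_rfl⟩).2
  -- clamping at `s` keeps the points in `[s, b]` and changes only increments of weight zero
  set u : ℕ → ℝ := fun i ↦ max (t i) s
  have hterm : ∀ i ∈ Finset.range m,
      (f (t (i + 1)) - f (t i)) * g (t i) ≤ M * |f (u (i + 1)) - f (u i)| := by
    intro i hi
    have hi : i < m := Finset.mem_range.1 hi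
    rcases lt_or_ge (t i) s with hts | hst
    · rw [hg0 _ ⟨(hP.mem_Icc hi.le).1, hts⟩, mul_zero]
      positivity
    · have hst' : s ≤ t (i + 1) := hst.trans (hP.2.2.2.1 i hi).le
      obtain ⟨hgt₀, hgtM⟩ := hg _ ⟨hst, (hP.mem_Icc hi.le).2⟩
      simp only [u, max_eq_left hst, max_eq_left hst']
      calc (f (t (i + 1)) - f (t i)) * g (t i) ≤ |f (t (i + 1)) - f (t i)| * g (t i) := by
            gcongr; exact le_abs_self _
        _ ≤ |f (t (i + 1)) - f (t i)| * M := by gcongr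
        _ = M * |f (t (i + 1)) - f (t i)| := mul_comm _ _
  have hu : MonotoneOn u (Iic m) := fun i hi j hj hij ↦
    max_le_max_right s (hP.strictMonoOn.monotoneOn hi hj hij)
  have hvar : ∑ i ∈ Finset.range m, |f (u (i + 1)) - f (u i)| ≤ (eVariationOn f T).toReal :=
    hf.sum_abs_sub_le hu fun i hi ↦ hT ⟨le_max_right _ _, max_le (hP.mem_Icc hi).2 hsb⟩
  have hsum := (Finset.sum_le_sum hterm).trans_eq (Finset.mul_sum ..).symm
  simp only [RSSum]
  rw [sum_range_mul_sub_by_parts (fun i ↦ f (t i)) (fun i ↦ g (t i)), hP.2.2.1, hP.2.1, hga]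
  linarith [mul_le_mul_of_nonneg_left hvar hM]

theorem exists_isGLB_setOf_ne_zero {g : ℝ → ℝ} {a b : ℝ} (hg : ∃ x ∈ Icc a b, g x ≠ 0) :
    ∃ s ∈ Icc a b, IsGLB {x ∈ Icc a b | g x ≠ 0} s ∧ ∀ x ∈ Ico a s, g x = 0 := by
  obtain ⟨x₀, hx₀, hgx₀⟩ := hg
  obtain ⟨s, hs⟩ := Real.exists_isGLB (s := {x ∈ Icc a b | g x ≠ 0}) ⟨x₀, hx₀, hgx₀⟩
    ⟨a, fun x hx ↦ hx.1.1⟩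
  have hsb : s ≤ b := (hs.1 ⟨hx₀, hgx₀⟩).trans hx₀.2
  refine ⟨s, ⟨hs.2 fun x hx ↦ hx.1.1, hsb⟩, hs, fun x hx ↦ ?_⟩
  by_contra hgx
  exact hx.2.not_ge (hs.1 ⟨⟨hx.1, hx.2.le.trans hsb⟩, hgx⟩)

theorem stmt_1_general (a b : ℝ) (f g : ℝ → ℝ)
    (hf_cont : ContinuousOn f (Set.Icc a b))
    (hf_pos : ∀ x ∈ Set.Icc a b, 0 < f x)
    (hf_bv : BoundedVariationOn f (Set.Icc a b))
    (hg_nonneg : ∀ x ∈ Set.Icc a b, 0 ≤ g x)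
    (hg_bv : BoundedVariationOn g (Set.Icc a b))
    (hg_ne : ∃ x ∈ Set.Icc a b, g x ≠ 0)
    (hga : g a = 0) :
    ∃ y ∈ Set.Ioc a b, 0 < RSIntegral f g a y := by
  obtain ⟨s, hs, hsK, hg0⟩ := exists_isGLB_setOf_ne_zero hg_ne
  obtain ⟨z, hz, hfz⟩ := isCompact_Icc.exists_isMinOn ⟨s, hs⟩ hf_cont
  obtain ⟨y₀, hy₀K, hVy₀⟩ := hsK.exists_mem_eVariationOn_inter_Icc_lt hg_ne (sep_subset _ _)
    hf_bv (hf_cont s hs) (ENNReal.ofReal_pos.2 (half_pos (hf_pos z hz)))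
  have hgy₀ : 0 < g y₀ := (hg_nonneg _ hy₀K.1).lt_of_ne' hy₀K.2
  have hsy₀ : Icc s y₀ ⊆ Icc a b := Icc_subset_Icc hs.1 hy₀K.1.2
  obtain ⟨y, hy, hgy⟩ := exists_lt_two_mul_of_bddAbove (hg_bv.mono hsy₀).bddAbove_image
    ⟨y₀, ⟨hsK.1 hy₀K, le_rfl⟩, hgy₀⟩
  have hgy_pos : 0 < g y := by linarith [hgy y₀ ⟨hsK.1 hy₀K, le_rfl⟩]
  have hay : a < y := (hs.1.trans hy.1).lt_of_ne (by rintro rfl; simp [hga] at hgy_pos)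
  have hyb : y ≤ b := hy.2.trans hy₀K.1.2
  have hsy : Icc s y ⊆ Icc a b ∩ Icc s y₀ := fun x hx ↦
    ⟨hsy₀ ⟨hx.1, hx.2.trans hy.2⟩, hx.1, hx.2.trans hy.2⟩
  set V := (eVariationOn f (Icc a b ∩ Icc s y₀)).toReal
  have hlower : ∀ (m : ℕ) (t : ℕ → ℝ), IsTaggedPartition a y m t (fun i ↦ t (i + 1)) →
      f y * g y - 2 * g y * V ≤ RSSum f g m t (fun i ↦ t (i + 1)) := fun m t hP ↦
    le_RSSum_right hP hga hy.1 hg0 (fun x hx ↦ ⟨hg_nonneg x (hsy hx).1, (hgy x (hsy hx).2).le⟩)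
      (hf_bv.mono inter_subset_left) hsy
  refine ⟨y, ⟨hay, hyb⟩, lt_of_lt_of_le ?_ (le_RSIntegral_of_le_RSSum_right hay
    (hf_cont.mono (Icc_subset_Icc_right hyb)) (hg_bv.mono (Icc_subset_Icc_right hyb)) hlower)⟩
  have hV : V < f z / 2 := ENNReal.toReal_lt_of_lt_ofReal hVy₀
  have hfy : f z ≤ f y := hfz ⟨hay.le, hyb⟩
  linarith [mul_pos hgy_pos (show 0 < f y - 2 * V by linarith)]

/-- Theorem 3 of the paper: if `f` is continuous, positive and of bounded
variation on `[a, b]`, and `g` is a non-negative, non-vanishing function of bounded variation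
with `g a = 0`, then `∫_a^y f dg > 0` for some `y ∈ (a, b]`. -/
theorem stmt_1 (a b : ℝ) (hab : a ≤ b) (f g : ℝ → ℝ)
    (hf_cont : ContinuousOn f (Set.Icc a b))
    (hf_pos : ∀ x ∈ Set.Icc a b, 0 < f x)
    (hf_bv : BoundedVariationOn f (Set.Icc a b))
    (hg_nonneg : ∀ x ∈ Set.Icc a b, 0 ≤ g x)
    (hg_bv : BoundedVariationOn g (Set.Icc a b))
    (hg_ne : ∃ x ∈ Set.Icc a b, g x ≠ 0)
    (hga : g a = 0) :
    ∃ y ∈ Set.Ioc a b, 0 < RSIntegral f g a y :=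
  stmt_1_general a b f g hf_cont hf_pos hf_bv hg_nonneg hg_bv hg_ne hga
end

section
/- Let f : [a,b] → (0,∞) be continuous with sequences (x̲_n), (x̄_n) satisfying a < ⋯ < x̲_n < x̄_n < ⋯ < x̲_1 < x̄_1 ≤ b, lim_{n→∞} x̄_n = a, and f(x̄_n) − f(x̲_n) ≥ α n^{−γ} for all n, where α > 0 and γ ∈ (0,1). Let β > 1 and h(x) := Σ_{n∈ℕ} n^{−β} χ_{[x̲_n, x̄_n)}(x). Then there exists n₀ ∈ ℕ such that for all n ≥ n₀, ∫_a^{x̲_n} f(x) dh(x) < 0. -/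
open Set Filter MeasureTheory

/-! The function `h` is an absolutely summable series of weighted Heaviside steps
`𝟙_{[s, ∞)}`, and the Riemann–Stieltjes sums of `f` against one step over `[a, c]` differ from
`f s` (or from `0` when `s ∉ (a, c]`) by at most the oscillation of `f` on one subinterval.
Uniform continuity of `f` makes this uniform in the step, so
`∫_a^{x̲ₙ} f dh = n^{-β} f(x̲ₙ) + ∑_{k > n} k^{-β} (f(x̲ₖ) - f(x̄ₖ))`.
The first term is `O(n^{-β})`, while the oscillation condition bounds the tail by
`-α ∑_{n < k ≤ 2n} k^{-β-γ} ≤ -α 2^{-β-γ} n^{1-β-γ}`, which wins because `γ < 1`. -/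

section RiemannStieltjes

variable {f g g₁ g₂ : ℝ → ℝ} {a b I I₁ I₂ : ℝ} {m : ℕ} {t ξ : ℕ → ℝ}

theorem RSSum_sub_right :
    RSSum f (g₁ - g₂) m t ξ = RSSum f g₁ m t ξ - RSSum f g₂ m t ξ := by
  simp only [RSSum, Pi.sub_apply, ← Finset.sum_sub_distrib]
  exact Finset.sum_congr rfl fun _ _ => by ring

theorem RSSum_const_mul (r : ℝ) :
    RSSum f (fun x => r * g x) m t ξ = r * RSSum f g m t ξ := by
  simp only [RSSum, Finset.mul_sum]
  exact Finset.sum_congr rfl fun _ _ => by ring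

theorem hasSum_RSSum {ι : Type*} {G : ι → ℝ → ℝ}
    (hG : ∀ x, HasSum (fun k => G k x) (g x)) :
    HasSum (fun k => RSSum f (G k) m t ξ) (RSSum f g m t ξ) :=
  hasSum_sum fun _ _ => ((hG _).sub (hG _)).mul_left _

theorem HasRSIntegral.sub (h₁ : HasRSIntegral f g₁ a b I₁)
    (h₂ : HasRSIntegral f g₂ a b I₂) :
    HasRSIntegral f (g₁ - g₂) a b (I₁ - I₂) := by
  intro ε hε
  obtain ⟨δ₁, hδ₁, H₁⟩ := h₁ (ε / 2) (half_pos hε)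
  obtain ⟨δ₂, hδ₂, H₂⟩ := h₂ (ε / 2) (half_pos hε)
  refine ⟨min δ₁ δ₂, lt_min hδ₁ hδ₂, fun m t ξ hp hmesh => ?_⟩
  have e₁ := H₁ m t ξ hp fun i hi => (hmesh i hi).trans_le (min_le_left _ _)
  have e₂ := H₂ m t ξ hp fun i hi => (hmesh i hi).trans_le (min_le_right _ _)
  rw [RSSum_sub_right]
  calc |RSSum f g₁ m t ξ - RSSum f g₂ m t ξ - (I₁ - I₂)|
      = |(RSSum f g₁ m t ξ - I₁) - (RSSum f g₂ m t ξ - I₂)| := by ring_nf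
    _ ≤ |RSSum f g₁ m t ξ - I₁| + |RSSum f g₂ m t ξ - I₂| := abs_sub _ _
    _ < ε := by linarith

theorem IsTaggedPartition.le_of_le (hp : IsTaggedPartition a b m t ξ) {i j : ℕ} (hij : i ≤ j)
    (hj : j ≤ m) : t i ≤ t j := by
  induction j, hij using Nat.le_induction with
  | base => rfl
  | succ j hij ih => exact (ih (by omega)).trans (hp.2.2.2.1 j (by omega)).le

theorem IsTaggedPartition.mem_Icc_s7 (hp : IsTaggedPartition a b m t ξ) {i : ℕ} (hi : i ≤ m) :
    t i ∈ Icc a b :=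
  ⟨hp.2.1 ▸ hp.le_of_le (Nat.zero_le i) hi, hp.2.2.1 ▸ hp.le_of_le hi le_rfl⟩

theorem IsTaggedPartition.tag_mem_Icc_s7 (hp : IsTaggedPartition a b m t ξ) {i : ℕ} (hi : i < m) :
    ξ i ∈ Icc a b :=
  ⟨(hp.mem_Icc_s7 hi.le).1.trans (hp.2.2.2.2 i hi).1, (hp.2.2.2.2 i hi).2.trans (hp.mem_Icc_s7 hi).2⟩

theorem exists_isTaggedPartition_mesh_lt (hab : a < b) {δ : ℝ} (hδ : 0 < δ) :
    ∃ m t ξ, IsTaggedPartition a b m t ξ ∧ ∀ i < m, t (i + 1) - t i < δ := by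
  obtain ⟨m, hm⟩ := exists_nat_gt ((b - a) / δ)
  have hm0 : (0 : ℝ) < m := lt_of_le_of_lt (div_nonneg (sub_nonneg.2 hab.le) hδ.le) hm
  have hstep : 0 < (b - a) / m := div_pos (sub_pos.2 hab) hm0
  set t : ℕ → ℝ := fun i => a + i * ((b - a) / m)
  have ht : ∀ i, t (i + 1) - t i = (b - a) / m := fun i => by simp only [t]; push_cast; ring
  refine ⟨m, t, t, ⟨by exact_mod_cast hm0, by simp [t], by simp [t]; field_simp; ring,
    fun i _ => by linarith [ht i], fun i _ => ⟨le_rfl, by linarith [ht i]⟩⟩, fun i _ => ?_⟩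
  rw [ht, div_lt_iff₀ hm0]
  rwa [div_lt_iff₀ hδ, mul_comm] at hm

theorem HasRSIntegral.unique (hab : a < b) (h₁ : HasRSIntegral f g a b I₁)
    (h₂ : HasRSIntegral f g a b I₂) : I₁ = I₂ := by
  refine eq_of_forall_dist_le fun ε hε => ?_
  obtain ⟨δ, hδ, H⟩ := (h₁.sub h₂) ε hε
  obtain ⟨m, t, ξ, hp, hmesh⟩ := exists_isTaggedPartition_mesh_lt hab hδ
  have := H m t ξ hp hmesh
  rw [RSSum_sub_right, sub_self, zero_sub, abs_neg] at this
  exact this.le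

theorem HasRSIntegral.rsIntegral_eq (hab : a < b) (hI : HasRSIntegral f g a b I) :
    RSIntegral f g a b = I := by
  have hex : ∃ I, HasRSIntegral f g a b I := ⟨I, hI⟩
  rw [RSIntegral, dif_pos hex]
  exact hex.choose_spec.unique hab hI

end RiemannStieltjes

section Jumps

variable {f : ℝ → ℝ} {a c : ℝ}

theorem indicator_Ici_sub_indicator_Ici {x y : ℝ} (hxy : x ≤ y) (s : ℝ) :
    (Ici s).indicator (1 : ℝ → ℝ) y - (Ici s).indicator 1 x = (Ioc x y).indicator 1 s := by
  by_cases hsx : s ≤ x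
  · have hsy : s ≤ y := hsx.trans hxy
    simp [indicator_of_mem, hsx, hsy, indicator_of_notMem]
  · by_cases hsy : s ≤ y
    · simp [indicator_of_mem, hsx, hsy, indicator_of_notMem, lt_of_not_ge hsx]
    · simp [hsx, hsy, indicator_of_notMem]

theorem abs_RSSum_indicator_Ici_sub_le {m : ℕ} {t ξ : ℕ → ℝ} {ε δ : ℝ} (hε : 0 ≤ ε)
    (hf : ∀ x ∈ Icc a c, ∀ y ∈ Icc a c, dist x y < δ → dist (f x) (f y) < ε)
    (hp : IsTaggedPartition a c m t ξ) (hmesh : ∀ i < m, t (i + 1) - t i < δ) (s : ℝ) :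
    |RSSum f ((Ici s).indicator 1) m t ξ - (Ioc a c).indicator f s| ≤ ε := by
  set e : ℕ → ℝ := fun i => (Ioc (t i) (t (i + 1))).indicator 1 s
  have he : ∀ i < m, (Ici s).indicator 1 (t (i + 1)) - (Ici s).indicator 1 (t i) = e i :=
    fun i hi => indicator_Ici_sub_indicator_Ici (hp.2.2.2.1 i hi).le s
  have hsum : ∑ i ∈ Finset.range m, e i = (Ioc a c).indicator 1 s := by
    rw [← Finset.sum_congr rfl fun i hi => he i (Finset.mem_range.1 hi),
      Finset.sum_range_sub (fun i => (Ici s).indicator 1 (t i)), hp.2.2.1, hp.2.1]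
    exact indicator_Ici_sub_indicator_Ici (hp.2.2.1 ▸ hp.mem_Icc_s7 le_rfl).1 s
  have he_nonneg : ∀ i, 0 ≤ e i := fun i => indicator_nonneg (fun _ _ => zero_le_one) s
  have hterm : ∀ i < m, |f (ξ i) - f s| * e i ≤ ε * e i := by
    intro i hi
    by_cases hs : s ∈ Ioc (t i) (t (i + 1))
    · simp only [e, indicator_of_mem hs, Pi.one_apply, mul_one]
      have hsI : s ∈ Icc a c :=
        ⟨(hp.mem_Icc_s7 hi.le).1.trans hs.1.le, hs.2.trans (hp.mem_Icc_s7 hi).2⟩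
      have hξ := hp.2.2.2.2 i hi
      have hd : dist (ξ i) s < δ := by
        rw [Real.dist_eq, abs_lt]
        constructor <;> linarith [hs.1, hs.2, hξ.1, hξ.2, hmesh i hi]
      simpa only [Real.dist_eq] using (hf _ (hp.tag_mem_Icc_s7 hi) _ hsI hd).le
    · simp [e, indicator_of_notMem hs]
  calc |RSSum f ((Ici s).indicator 1) m t ξ - (Ioc a c).indicator f s|
      = |∑ i ∈ Finset.range m, (f (ξ i) - f s) * e i| := by
        have hind : (Ioc a c).indicator f s = f s * (Ioc a c).indicator 1 s := by
          by_cases h : s ∈ Ioc a c <;> simp [h]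
        rw [RSSum, hind, ← hsum, Finset.mul_sum, ← Finset.sum_sub_distrib]
        exact congrArg _ (Finset.sum_congr rfl fun i hi => by
          rw [he i (Finset.mem_range.1 hi)]; ring)
    _ ≤ ∑ i ∈ Finset.range m, |f (ξ i) - f s| * e i := by
        refine (Finset.abs_sum_le_sum_abs _ _).trans_eq (Finset.sum_congr rfl fun i _ => ?_)
        rw [abs_mul, abs_of_nonneg (he_nonneg i)]
    _ ≤ ∑ i ∈ Finset.range m, ε * e i :=
        Finset.sum_le_sum fun i hi => hterm i (Finset.mem_range.1 hi)
    _ = ε * (Ioc a c).indicator 1 s := by rw [← Finset.mul_sum, hsum]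
    _ ≤ ε := mul_le_of_le_one_right hε (indicator_le_self' (fun _ _ => zero_le_one) s)

variable {ι : Type*} {w : ι → ℝ}

theorem summable_mul_indicator_Ici (hw : Summable w) (s : ι → ℝ) (x : ℝ) :
    Summable fun k => w k * (Ici (s k)).indicator 1 x :=
  Summable.of_norm_bounded hw.abs fun k => by
    rw [norm_mul, Real.norm_eq_abs]
    exact mul_le_of_le_one_right (abs_nonneg _) (norm_indicator_le_norm_self _ _ |>.trans (by simp))

theorem summable_mul_indicator_Ioc (hf : ContinuousOn f (Icc a c)) (hw : Summable w)
    (s : ι → ℝ) : Summable fun k => w k * (Ioc a c).indicator f (s k) := by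
  obtain ⟨M, hM⟩ := isCompact_Icc.exists_bound_of_continuousOn hf
  refine Summable.of_norm_bounded (hw.abs.mul_right (max M 0)) fun k => ?_
  rw [norm_mul, Real.norm_eq_abs]
  refine mul_le_mul_of_nonneg_left ?_ (abs_nonneg _)
  by_cases hk : s k ∈ Ioc a c
  · rw [indicator_of_mem hk]
    exact le_max_of_le_left (hM _ (Ioc_subset_Icc_self hk))
  · simp [indicator_of_notMem hk]

theorem hasRSIntegral_tsum_mul_indicator_Ici {s : ι → ℝ} (hf : ContinuousOn f (Icc a c))
    (hw : Summable w) :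
    HasRSIntegral f (fun x => ∑' k, w k * (Ici (s k)).indicator 1 x) a c
      (∑' k, w k * (Ioc a c).indicator f (s k)) := by
  intro ε hε
  set S := ∑' k, |w k|
  have hS : 0 ≤ S := tsum_nonneg fun k => abs_nonneg _
  have hε' : 0 < ε / (S + 1) := div_pos hε (by linarith)
  obtain ⟨δ, hδ, hfδ⟩ := Metric.uniformContinuousOn_iff.mp
    (isCompact_Icc.uniformContinuousOn_of_continuous hf) _ hε'
  refine ⟨δ, hδ, fun m t ξ hp hmesh => ?_⟩
  have hR := hasSum_RSSum (fun x => (summable_mul_indicator_Ici hw s x).hasSum)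
    (f := f) (m := m) (t := t) (ξ := ξ)
  have hbound := (hR.sub (summable_mul_indicator_Ioc hf hw s).hasSum).norm_le_of_bounded
    (hw.abs.hasSum.mul_right _) fun k => by
      rw [Real.norm_eq_abs, RSSum_const_mul, ← mul_sub, abs_mul]
      exact mul_le_mul_of_nonneg_left
        (abs_RSSum_indicator_Ici_sub_le hε'.le hfδ hp hmesh (s k)) (abs_nonneg _)
  rw [Real.norm_eq_abs] at hbound
  refine hbound.trans_lt ?_
  rw [mul_div_assoc', div_lt_iff₀ (by linarith)]
  nlinarith

end Jumps

theorem Summable.tsum_le_sub_card_mul {T : ℕ → ℝ} (hT : Summable T) {n : ℕ} {s : Finset ℕ}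
    {A B : ℝ} (hs : n ∉ s) (hTn : T n ≤ A) (hT_ne : ∀ k ≠ n, T k ≤ 0)
    (hT_s : ∀ k ∈ s, T k ≤ -B) :
    ∑' k, T k ≤ A - s.card * B :=
  calc ∑' k, T k ≤ ∑ k ∈ Finset.cons n s hs, T k := by
        have := hT.neg.sum_le_tsum (Finset.cons n s hs) fun k hk =>
          neg_nonneg.2 (hT_ne k fun h => hk (h ▸ Finset.mem_cons_self n s))
        rwa [tsum_neg, Finset.sum_neg_distrib, neg_le_neg_iff] at this
    _ = T n + ∑ k ∈ s, T k := Finset.sum_cons hs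
    _ ≤ A + ∑ k ∈ s, -B := add_le_add hTn (Finset.sum_le_sum hT_s)
    _ = A - s.card * B := by rw [Finset.sum_const, nsmul_eq_mul]; ring

section Oscillation

variable {f h : ℝ → ℝ} {a c α β γ M : ℝ} {xl xu w : ℕ → ℝ}

theorem hasRSIntegral_of_eq_tsum_indicator_Ico (hf : ContinuousOn f (Icc a c)) (hw : Summable w)
    (h_pair : ∀ k, 1 ≤ k → xl k < xu k)
    (hh : ∀ x, h x = ∑' k, if 1 ≤ k ∧ x ∈ Ico (xl k) (xu k) then w k else 0) :
    HasRSIntegral f h a c (∑' k, if 1 ≤ k then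
      w k * ((Ioc a c).indicator f (xl k) - (Ioc a c).indicator f (xu k)) else 0) := by
  set v : ℕ → ℝ := fun k => if 1 ≤ k then w k else 0
  have hv : Summable v := Summable.of_norm_bounded hw.abs fun k => by
    by_cases hk : 1 ≤ k <;> simp [v, hk]
  have hsplit : h = (fun x => ∑' k, v k * (Ici (xl k)).indicator 1 x) -
      fun x => ∑' k, v k * (Ici (xu k)).indicator 1 x := by
    funext x
    rw [hh, Pi.sub_apply, ← (summable_mul_indicator_Ici hv xl x).tsum_sub
      (summable_mul_indicator_Ici hv xu x)]
    refine tsum_congr fun k => ?_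
    by_cases hk : 1 ≤ k
    · have := h_pair k hk
      simp only [v, hk, true_and, if_true, indicator_apply, mem_Ici, mem_Ico, Pi.one_apply]
      rcases le_or_gt (xl k) x with h₁ | h₁ <;> rcases le_or_gt (xu k) x with h₂ | h₂
      · simp [h₁, h₂, not_lt.2 h₂]
      · simp [h₁, h₂, not_le.2 h₂]
      · linarith
      · simp [not_le.2 h₁, not_le.2 h₂]
    · simp [v, hk]
  rw [hsplit]
  convert (hasRSIntegral_tsum_mul_indicator_Ici hf hv).sub
    (hasRSIntegral_tsum_mul_indicator_Ici hf hv) using 1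
  rw [← (summable_mul_indicator_Ioc hf hv xl).tsum_sub (summable_mul_indicator_Ioc hf hv xu)]
  refine tsum_congr fun k => ?_
  by_cases hk : 1 ≤ k <;> simp [v, hk, mul_sub]

theorem xu_lt_xl_of_lt (h_pair : ∀ k, 1 ≤ k → xl k < xu k)
    (h_order : ∀ k, 1 ≤ k → xu (k + 1) < xl k) {k l : ℕ} (hk : 1 ≤ k) (hkl : k < l) :
    xu l < xl k := by
  induction l, hkl using Nat.le_induction with
  | base => exact h_order k hk
  | succ l hl ih => exact (h_order l (by omega)).trans ((h_pair l (by omega)).trans ih)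

theorem indicator_Ioc_xl_sub_indicator_xu_of_lt (h_pair : ∀ k, 1 ≤ k → xl k < xu k)
    (h_order : ∀ k, 1 ≤ k → xu (k + 1) < xl k) {n k : ℕ} (hk : 1 ≤ k) (hkn : k < n) :
    (Ioc a (xl n)).indicator f (xl k) - (Ioc a (xl n)).indicator f (xu k) = 0 := by
  have := (h_pair n (by omega)).trans (xu_lt_xl_of_lt h_pair h_order hk hkn)
  rw [indicator_of_notMem (fun h => h.2.not_gt this),
    indicator_of_notMem (fun h => h.2.not_gt (this.trans (h_pair k hk))), sub_zero]

theorem indicator_Ioc_xl_sub_indicator_xu_of_gt (h_lt : ∀ k, 1 ≤ k → a < xl k)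
    (h_pair : ∀ k, 1 ≤ k → xl k < xu k) (h_order : ∀ k, 1 ≤ k → xu (k + 1) < xl k)
    {n k : ℕ} (hn : 1 ≤ n) (hnk : n < k) :
    (Ioc a (xl n)).indicator f (xl k) - (Ioc a (xl n)).indicator f (xu k)
      = f (xl k) - f (xu k) := by
  have hk := xu_lt_xl_of_lt h_pair h_order hn hnk
  have := h_pair k (by omega)
  rw [indicator_of_mem (show xl k ∈ Ioc a (xl n) from ⟨h_lt k (by omega), by linarith⟩),
    indicator_of_mem (show xu k ∈ Ioc a (xl n) from ⟨by linarith [h_lt k (by omega)], hk.le⟩)]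

theorem tsum_jumps_le {n : ℕ} (hn : 1 ≤ n) (hf : ContinuousOn f (Icc a (xl n)))
    (hM : ∀ x ∈ Ioc a (xl n), f x ≤ M) (hα : 0 ≤ α) (hβ : 1 < β) (hγ : 0 ≤ γ)
    (h_lt : ∀ k, 1 ≤ k → a < xl k) (h_pair : ∀ k, 1 ≤ k → xl k < xu k)
    (h_order : ∀ k, 1 ≤ k → xu (k + 1) < xl k)
    (h_osc : ∀ k : ℕ, 1 ≤ k → α * (k : ℝ) ^ (-γ) ≤ f (xu k) - f (xl k)) :
    ∑' k : ℕ, (if 1 ≤ k then (k : ℝ) ^ (-β) *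
        ((Ioc a (xl n)).indicator f (xl k) - (Ioc a (xl n)).indicator f (xu k)) else 0)
      ≤ M * (n : ℝ) ^ (-β) - α * n * (2 * n : ℝ) ^ (-(β + γ)) := by
  set φ := (Ioc a (xl n)).indicator f
  set T : ℕ → ℝ := fun k => if 1 ≤ k then (k : ℝ) ^ (-β) * (φ (xl k) - φ (xu k)) else 0
  have hw : Summable fun k : ℕ => (k : ℝ) ^ (-β) := Real.summable_nat_rpow.2 (by linarith)
  have hT : Summable T := Summable.of_norm_bounded
    ((summable_mul_indicator_Ioc hf hw xl).sub (summable_mul_indicator_Ioc hf hw xu)).abs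
    fun k => by by_cases hk : 1 ≤ k <;> simp [T, φ, hk, mul_sub]
  have hT_eq : T n ≤ M * (n : ℝ) ^ (-β) := by
    simp only [T, φ, if_pos hn,
      indicator_of_mem (show xl n ∈ Ioc a (xl n) from ⟨h_lt n hn, le_rfl⟩),
      indicator_of_notMem (fun h : xu n ∈ Ioc a (xl n) => h.2.not_gt (h_pair n hn)), sub_zero]
    rw [mul_comm]
    exact mul_le_mul_of_nonneg_right (hM _ ⟨h_lt n hn, le_rfl⟩) (by positivity)
  have hT_lt : ∀ k < n, T k = 0 := fun k hk => by
    by_cases hk1 : 1 ≤ k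
    · simp only [T, φ, if_pos hk1, indicator_Ioc_xl_sub_indicator_xu_of_lt h_pair h_order hk1 hk,
        mul_zero]
    · simp [T, hk1]
  have hT_gt : ∀ k, n < k → T k ≤ -α * (k : ℝ) ^ (-(β + γ)) := by
    intro k hk
    have hk1 : 1 ≤ k := by omega
    have hk0 : (0 : ℝ) < k := by exact_mod_cast hk1
    simp only [T, φ, if_pos hk1, indicator_Ioc_xl_sub_indicator_xu_of_gt h_lt h_pair h_order hn hk]
    rw [neg_add, Real.rpow_add hk0]
    nlinarith [h_osc k hk1, Real.rpow_nonneg hk0.le (-β)]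
  have hT_ne : ∀ k ≠ n, T k ≤ 0 := fun k hk => by
    rcases lt_or_gt_of_ne hk with hk' | hk'
    · exact (hT_lt k hk').le
    · exact (hT_gt k hk').trans (mul_nonpos_of_nonpos_of_nonneg (by linarith) (by positivity))
  have hT_Ioc : ∀ k ∈ Finset.Ioc n (2 * n), T k ≤ -(α * (2 * n : ℝ) ^ (-(β + γ))) := by
    intro k hk
    obtain ⟨hnk, hk2⟩ := Finset.mem_Ioc.1 hk
    rw [← neg_mul]
    refine (hT_gt k hnk).trans (mul_le_mul_of_nonpos_left ?_ (by linarith))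
    exact Real.rpow_le_rpow_of_nonpos (by exact_mod_cast (by omega : 0 < k))
      (by exact_mod_cast hk2) (by linarith)
  refine (hT.tsum_le_sub_card_mul (by simp) hT_eq hT_ne hT_Ioc).trans_eq ?_
  rw [Nat.card_Ioc, show 2 * n - n = n by omega]
  ring

theorem eventually_mul_rpow_lt (hα : 0 < α) (hγ : γ < 1) (M β : ℝ) :
    ∀ᶠ n : ℕ in atTop, M * (n : ℝ) ^ (-β) < α * n * (2 * n : ℝ) ^ (-(β + γ)) := by
  have htend : Tendsto (fun n : ℕ => α * 2 ^ (-(β + γ)) * (n : ℝ) ^ (1 - γ)) atTop atTop :=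
    ((tendsto_rpow_atTop (by linarith)).comp tendsto_natCast_atTop_atTop).const_mul_atTop
      (by positivity)
  filter_upwards [htend.eventually_gt_atTop M, eventually_ge_atTop 1] with n hn hn1
  have hn0 : (0 : ℝ) < n := by exact_mod_cast hn1
  have hsplit : α * n * (2 * n : ℝ) ^ (-(β + γ))
      = α * 2 ^ (-(β + γ)) * (n : ℝ) ^ (1 - γ) * (n : ℝ) ^ (-β) := by
    have hexp : (n : ℝ) ^ (1 - γ) * (n : ℝ) ^ (-β) = n * (n : ℝ) ^ (-(β + γ)) := by
      rw [← Real.rpow_add hn0, show 1 - γ + -β = 1 + -(β + γ) by ring, Real.rpow_add hn0,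
        Real.rpow_one]
    rw [Real.mul_rpow zero_le_two hn0.le, mul_assoc _ ((n : ℝ) ^ (1 - γ)), hexp]
    ring
  rw [hsplit]
  exact mul_lt_mul_of_pos_right hn (by positivity)

end Oscillation

theorem stmt_7_general (a b α β γ : ℝ) (f : ℝ → ℝ) (xl xu : ℕ → ℝ)
    (hf_cont : ContinuousOn f (Set.Icc a b))
    (hα : 0 < α) (hγ : γ ∈ Set.Ioo (0 : ℝ) 1) (hβ : 1 < β)
    (h_lt : ∀ n : ℕ, 1 ≤ n → a < xl n)
    (h_pair : ∀ n : ℕ, 1 ≤ n → xl n < xu n)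
    (h_order : ∀ n : ℕ, 1 ≤ n → xu (n + 1) < xl n)
    (h_top : xu 1 ≤ b)
    (h_osc : ∀ n : ℕ, 1 ≤ n → α * (n : ℝ) ^ (-γ) ≤ f (xu n) - f (xl n))
    (h : ℝ → ℝ)
    (hh : ∀ x : ℝ, h x =
      ∑' n : ℕ, if 1 ≤ n ∧ x ∈ Set.Ico (xl n) (xu n) then (n : ℝ) ^ (-β) else 0) :
    ∃ n₀ : ℕ, 1 ≤ n₀ ∧ ∀ n : ℕ, n₀ ≤ n → RSIntegral f h a (xl n) < 0 := by
  obtain ⟨M, hM⟩ := isCompact_Icc.exists_bound_of_continuousOn hf_cont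
  obtain ⟨N, hN⟩ := eventually_atTop.mp (eventually_mul_rpow_lt hα hγ.2 M β)
  refine ⟨max N 1, le_max_right _ _, fun n hn => ?_⟩
  have hn1 : 1 ≤ n := le_of_max_le_right hn
  have hxl_le : xl n ≤ b := by
    refine (h_pair n hn1).le.trans (le_trans ?_ h_top)
    rcases hn1.eq_or_lt with rfl | hn1'
    · rfl
    · exact (xu_lt_xl_of_lt h_pair h_order le_rfl hn1').le.trans (h_pair 1 le_rfl).le
  have hf := hf_cont.mono (Icc_subset_Icc_right hxl_le)
  have hw : Summable fun k : ℕ => (k : ℝ) ^ (-β) := Real.summable_nat_rpow.2 (by linarith)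
  rw [(hasRSIntegral_of_eq_tsum_indicator_Ico hf hw h_pair hh).rsIntegral_eq (h_lt n hn1)]
  have hfM : ∀ x ∈ Ioc a (xl n), f x ≤ M := fun x hx =>
    (le_abs_self _).trans (hM x (Ioc_subset_Icc_self.trans (Icc_subset_Icc_right hxl_le) hx))
  exact (tsum_jumps_le hn1 hf hfM hα.le hβ hγ.1.le h_lt h_pair h_order h_osc).trans_lt
    (sub_neg.2 (hN n (le_of_max_le_left hn)))

/-- under the oscillation condition `f(x̄ₙ) − f(x̲ₙ) ≥ α n^{-γ}`, there is
`n₀` such that `∫_a^{x̲ₙ} f dh < 0` for all `n ≥ n₀`. -/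
theorem stmt_7 (a b α β γ : ℝ) (f : ℝ → ℝ) (xl xu : ℕ → ℝ)
    (hf_cont : ContinuousOn f (Set.Icc a b))
    (hf_pos : ∀ x ∈ Set.Icc a b, 0 < f x)
    (hα : 0 < α) (hγ : γ ∈ Set.Ioo (0 : ℝ) 1) (hβ : 1 < β)
    (h_lt : ∀ n : ℕ, 1 ≤ n → a < xl n)
    (h_pair : ∀ n : ℕ, 1 ≤ n → xl n < xu n)
    (h_order : ∀ n : ℕ, 1 ≤ n → xu (n + 1) < xl n)
    (h_top : xu 1 ≤ b)
    (h_lim : Filter.Tendsto xu Filter.atTop (nhds a))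
    (h_osc : ∀ n : ℕ, 1 ≤ n → α * (n : ℝ) ^ (-γ) ≤ f (xu n) - f (xl n))
    (h : ℝ → ℝ)
    (hh : ∀ x : ℝ, h x =
      ∑' n : ℕ, if 1 ≤ n ∧ x ∈ Set.Ico (xl n) (xu n) then (n : ℝ) ^ (-β) else 0) :
    ∃ n₀ : ℕ, 1 ≤ n₀ ∧ ∀ n : ℕ, n₀ ≤ n → RSIntegral f h a (xl n) < 0 :=
  stmt_7_general a b α β γ f xl xu hf_cont hα hγ hβ h_lt h_pair h_order h_top h_osc h hh
end
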